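/- Let Q be the transition matrix of a d-periodic chain on S absorbed at 0, with cyclic subclasses S_1,...,S_d. If ν is a quasi-stationary distribution, write ν = Σ_j m_j ν_j with ν_j = ν(· | S_j) and m_j = ν(S_j). Then for each j (indices mod d): m_j a(ν_j) = a(ν) m_{j+1}; ν_j T_n = ν_{j+n} for all n ≥ 0; and consequently (a(ν))^d = a(ν_1) a(ν_2) ··· a(ν_d). -/

import Mathlib

open scoped Classical

noncomputable section

/-- `n`-step transition probabilities of a kernel on a countable state space. -/
def kpow {α : Type*} (Q : α → α → ℝ) : ℕ → α → α → ℝ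
  | 0 => fun a b => if a = b then 1 else 0
  | n + 1 => fun a b => ∑' c, kpow Q n a c * Q c b

/-- Law at time `n` of the chain started from `ν` on `S`, evaluated at a point of
`S ∪ {0}` (represented as `Option S`, with `none` the absorbing state `0`). -/
def evolve {S : Type*} (Q : Option S → Option S → ℝ) (ν : S → ℝ) (n : ℕ)
    (y : Option S) : ℝ :=
  ∑' x : S, ν x * kpow Q n (some x) y

/-- `νT_n(y) = νQ^n(y) / (1 - νQ^n(0))`: the law at time `n` conditioned on
non-absorption up to time `n`.  (For `n = 0` this is `ν` itself.) -/
def condT {S : Type*} (Q : Option S → Option S → ℝ) (ν : S → ℝ) (n : ℕ) (y : S) : ℝ :=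
  evolve Q ν n (some y) / (1 - evolve Q ν n none)

/-- A probability measure on a countable set, as a nonnegative function summing to 1. -/
def IsProbability {α : Type*} (ν : α → ℝ) : Prop :=
  (∀ x, 0 ≤ ν x) ∧ HasSum ν 1

/-- Stochastic domination `μ ≺ μ'`: there is a coupling of `μ` and `μ'` supported
on `{(ω, ω') : ω ≤ ω'}`. -/
def StochDom {α : Type*} [Preorder α] (μ μ' : α → ℝ) : Prop :=
  ∃ π : α × α → ℝ, (∀ p, 0 ≤ π p) ∧ (∀ a, HasSum (fun b => π (a, b)) (μ a)) ∧
    (∀ b, HasSum (fun a => π (a, b)) (μ' b)) ∧ ∀ p, π p ≠ 0 → p.1 ≤ p.2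

/-- A measure on a product space is irreducible if any element of its support can be
reached from any other by successive single-coordinate changes staying in the support. -/
def IrreducibleMeasure {ι α : Type*} (μ : (ι → α) → ℝ) : Prop :=
  ∀ a b, μ a ≠ 0 → μ b ≠ 0 →
    Relation.ReflTransGen
      (fun u v => μ u ≠ 0 ∧ μ v ≠ 0 ∧ ∃ k, ∀ i, i ≠ k → u i = v i) a b

/-- The (unnormalized) law `(x_0,...,x_n) ↦ ν(x_0)Q(x_0,x_1)⋯Q(x_{n-1},x_n)` of a
length-`n` trajectory staying in `S`. -/
def trajMeasure {S : Type*} (Q : Option S → Option S → ℝ) (ν : S → ℝ) (n : ℕ)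
    (x : Fin (n + 1) → S) : ℝ :=
  ν (x 0) * ∏ k : Fin n, Q (some (x k.castSucc)) (some (x k.succ))


/-- `a(ν) = 1 - νQ(0)`: the probability of remaining in `S` after one step,
starting from `ν`. -/
def stayProb {S : Type*} (Q : Option S → Option S → ℝ) (ν : S → ℝ) : ℝ :=
  1 - ∑' x : S, ν x * Q (some x) none

/-- `ν(S_j)`: total mass given by `ν` to the cyclic subclass with label `j`
(the classes being the fibers of the labeling function `c`). -/
def classMass {S : Type*} {d : ℕ} (c : S → ZMod d) (ν : S → ℝ) (j : ZMod d) : ℝ :=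
  ∑' x : S, if c x = j then ν x else 0

/-- `ν(· | S_j)`: conditional law of `ν` given the cyclic subclass with label `j`. -/
def condClass {S : Type*} {d : ℕ} (c : S → ZMod d) (ν : S → ℝ) (j : ZMod d) : S → ℝ :=
  fun y => if c y = j then ν y / classMass c ν j else 0

/-!
Write `a = a(ν)`, `m_j = ν(S_j)` and `ρ_j` for the restriction of `ν` to `S_j`. Iterating the
qsd equation gives `νQ^n = aⁿ ν` on `S`, and since `Q^n` maps `S_j` into `S_{j+n} ∪ {0}`,
restricting the initial law to `S_j` restricts the law at time `n` to `S_{j+n}`: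
`ρ_j Q^n = aⁿ ρ_{j+n}` on `S`. Comparing total masses, `m_j - ρ_j Q^n(0) = aⁿ m_{j+n}`.
Hence if one `m_j` vanished, so would every `m_{j+n}`, i.e. all of `ν`; so all `m_j > 0`,
and normalising gives `ν_j T_n = ν_{j+n}` and, for `n = 1`, `m_j a(ν_j) = a m_{j+1}`.
Multiplying the latter over a full cycle, the masses cancel and `aᵈ = ∏ a(ν_j)`.
-/

lemma hasSum_tsum_swap_of_nonneg {α β : Type*} {f : α → β → ℝ} (hf : ∀ a b, 0 ≤ f a b)
    {r : α → ℝ} (hr : ∀ a, HasSum (f a) (r a)) {s : ℝ} (hs : HasSum r s) :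
    HasSum (fun b => ∑' a, f a b) s := by
  have hrow : Summable fun a => ∑' b, f a b := by
    simpa only [(hr _).tsum_eq] using hs.summable
  have hf' : Summable (Function.uncurry f) :=
    (summable_prod_of_nonneg fun p => hf p.1 p.2).2 ⟨fun a => (hr a).summable, hrow⟩
  obtain ⟨hcol, hcols⟩ := (summable_prod_of_nonneg fun p => hf p.2 p.1).1 hf'.prod_symm
  have hswap : ∑' b, ∑' a, f a b = s := by
    rw [hf'.tsum_comm' (fun a => (hr a).summable) hcol]
    simp only [(hr _).tsum_eq, hs.tsum_eq]
  exact hswap ▸ hcols.hasSum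

lemma hasSum_comp_some {α : Type*} {f : Option α → ℝ} {t : ℝ} (hf : HasSum f t) :
    HasSum (fun a => f (some a)) (t - f none) := by
  have h := hasSum_ite_sub_hasSum hf none
  rw [← (Option.some_injective α).hasSum_iff] at h
  · simpa [Function.comp_def] using h
  · rintro (_ | a) ha
    · simp
    · exact absurd ⟨a, rfl⟩ ha

lemma eq_zero_of_hasSum_one_of_eq_one {α : Type*} {f : α → ℝ} (hf0 : ∀ a, 0 ≤ f a)
    (hf : HasSum f 1) {a b : α} (ha : f a = 1) (hba : b ≠ a) : f b = 0 := by
  have h := sum_le_hasSum {a, b} (fun i _ => hf0 i) hf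
  rw [Finset.sum_pair hba.symm, ha] at h
  linarith [hf0 b]

lemma Finset.prod_range_natCast_add_one {M : Type*} [CommMonoid M] (d : ℕ)
    (f : ZMod d → M) : ∏ i ∈ range d, f ((i : ZMod d) + 1) = ∏ i ∈ range d, f i := by
  cases d with
  | zero => rfl
  | succ k =>
    rw [prod_range_succ, prod_range_succ' (fun i : ℕ => f i), ZMod.natCast_self',
      Nat.cast_zero]
    simp only [Nat.cast_succ]

lemma pow_eq_prod_of_mul_eq_mul_add_one {K : Type*} [Field K] {d : ℕ} {m s : ZMod d → K}
    {a : K} (hm : ∀ j, m j ≠ 0) (h : ∀ j, m j * s j = a * m (j + 1)) :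
    a ^ d = ∏ j ∈ Finset.range d, s j := by
  have hprod : ∏ j ∈ Finset.range d, (m j * s j) =
      ∏ j ∈ Finset.range d, (a * m ((j : ZMod d) + 1)) :=
    Finset.prod_congr rfl fun j _ => h j
  rw [Finset.prod_mul_distrib, Finset.prod_mul_distrib, Finset.prod_const, Finset.card_range,
    Finset.prod_range_natCast_add_one d m, mul_comm (a ^ d)] at hprod
  have hm' : ∏ j ∈ Finset.range d, m j ≠ 0 := Finset.prod_ne_zero_iff.2 fun j _ => hm j
  exact (mul_left_cancel₀ hm' hprod).symm

section Kpow

variable {α : Type*} {Q : α → α → ℝ}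

lemma kpow_nonneg (hQnn : ∀ a b, 0 ≤ Q a b) : ∀ (n : ℕ) (a b : α), 0 ≤ kpow Q n a b
  | 0, a, b => by simp only [kpow]; split_ifs <;> norm_num
  | n + 1, a, b => tsum_nonneg fun c => mul_nonneg (kpow_nonneg hQnn n a c) (hQnn c b)

lemma hasSum_kpow (hQnn : ∀ a b, 0 ≤ Q a b) (hQrow : ∀ a, HasSum (Q a) 1) :
    ∀ (n : ℕ) (a : α), HasSum (kpow Q n a) 1
  | 0, a => hasSum_ite_eq' a 1
  | n + 1, a =>
    hasSum_tsum_swap_of_nonneg (fun c b => mul_nonneg (kpow_nonneg hQnn n a c) (hQnn c b))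
      (fun c => by simpa using (hQrow c).mul_left (kpow Q n a c)) (hasSum_kpow hQnn hQrow n a)

lemma kpow_le_one (hQnn : ∀ a b, 0 ≤ Q a b) (hQrow : ∀ a, HasSum (Q a) 1)
    (n : ℕ) (a b : α) : kpow Q n a b ≤ 1 :=
  le_hasSum (hasSum_kpow hQnn hQrow n a) b fun c _ => kpow_nonneg hQnn n a c

@[simp]
lemma kpow_one (a b : α) : kpow Q 1 a b = Q a b := by
  simp [kpow]

end Kpow

section Evolve

variable {S : Type*} {Q : Option S → Option S → ℝ} {μ : S → ℝ}

lemma evolve_nonneg (hQnn : ∀ a b, 0 ≤ Q a b) (hμ0 : ∀ x, 0 ≤ μ x) (n : ℕ) (y : Option S) :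
    0 ≤ evolve Q μ n y :=
  tsum_nonneg fun x => mul_nonneg (hμ0 x) (kpow_nonneg hQnn n _ _)

lemma evolve_div_const (μ : S → ℝ) (r : ℝ) (n : ℕ) (y : Option S) :
    evolve Q (fun x => μ x / r) n y = evolve Q μ n y / r := by
  simp only [evolve, div_mul_eq_mul_div, tsum_div_const]

lemma stayProb_eq_one_sub_evolve (μ : S → ℝ) : stayProb Q μ = 1 - evolve Q μ 1 none := by
  simp only [stayProb, evolve, kpow_one]

lemma summable_mul_kpow (hQnn : ∀ a b, 0 ≤ Q a b) (hQrow : ∀ a, HasSum (Q a) 1)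
    (hμ0 : ∀ x, 0 ≤ μ x) (hμ : Summable μ) (n : ℕ) (y : Option S) :
    Summable fun x => μ x * kpow Q n (some x) y :=
  hμ.of_nonneg_of_le (fun x => mul_nonneg (hμ0 x) (kpow_nonneg hQnn n _ _))
    fun x => mul_le_of_le_one_right (hμ0 x) (kpow_le_one hQnn hQrow n _ _)

lemma hasSum_evolve (hQnn : ∀ a b, 0 ≤ Q a b) (hQrow : ∀ a, HasSum (Q a) 1)
    (hμ0 : ∀ x, 0 ≤ μ x) {t : ℝ} (hμ : HasSum μ t) (n : ℕ) : HasSum (evolve Q μ n) t :=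
  hasSum_tsum_swap_of_nonneg (fun x b => mul_nonneg (hμ0 x) (kpow_nonneg hQnn n _ _))
    (fun x => by simpa using (hasSum_kpow hQnn hQrow n (some x)).mul_left (μ x)) hμ

/-- Chapman–Kolmogorov on `S`: the absorbing state `0` does not feed back into `S`. -/
lemma evolve_succ_some (hQnn : ∀ a b, 0 ≤ Q a b) (hQrow : ∀ a, HasSum (Q a) 1)
    (hQ00 : Q none none = 1) (hμ0 : ∀ x, 0 ≤ μ x) (hμ : Summable μ) (n : ℕ) (y : S) :
    evolve Q μ (n + 1) (some y) = ∑' z : S, evolve Q μ n (some z) * Q (some z) (some y) := by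
  have hrow : ∀ x : S, HasSum (fun z => μ x * (kpow Q n (some x) z * Q z (some y)))
      (μ x * kpow Q (n + 1) (some x) (some y)) := fun x =>
    (Summable.hasSum (((hasSum_kpow hQnn hQrow n (some x)).summable).of_nonneg_of_le
      (fun z => mul_nonneg (kpow_nonneg hQnn n _ _) (hQnn _ _))
      fun z => mul_le_of_le_one_right (kpow_nonneg hQnn n _ _)
        (le_hasSum (hQrow z) (some y) fun b _ => hQnn z b))).mul_left (μ x)
  have hswap := hasSum_tsum_swap_of_nonneg
    (fun x z => mul_nonneg (hμ0 x) (mul_nonneg (kpow_nonneg hQnn n _ _) (hQnn _ _))) hrow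
    (summable_mul_kpow hQnn hQrow hμ0 hμ (n + 1) (some y)).hasSum
  simp only [← mul_assoc, tsum_mul_right] at hswap
  have hnone : Q none (some y) = 0 :=
    eq_zero_of_hasSum_one_of_eq_one (hQnn none) (hQrow none) hQ00 (Option.some_ne_none y)
  simpa [hnone, evolve] using (hasSum_comp_some hswap).tsum_eq.symm

end Evolve

section CyclicClasses

variable {S : Type*} {Q : Option S → Option S → ℝ} {d : ℕ} {c : S → ZMod d}

lemma label_eq_add_of_kpow_ne_zero (hQnn : ∀ a b, 0 ≤ Q a b) (hQrow : ∀ a, HasSum (Q a) 1)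
    (hQ00 : Q none none = 1) (hcQ : ∀ x y : S, Q (some x) (some y) ≠ 0 → c y = c x + 1) :
    ∀ (n : ℕ) (x y : S), kpow Q n (some x) (some y) ≠ 0 → c y = c x + n
  | 0, x, y, h => by
    obtain rfl : x = y := by simpa [kpow] using h
    simp
  | n + 1, x, y, h => by
    obtain ⟨z, hz⟩ : ∃ z, kpow Q n (some x) z * Q z (some y) ≠ 0 := by
      by_contra! h0
      exact h (by simp [kpow, h0])
    have hnone : Q none (some y) = 0 :=
      eq_zero_of_hasSum_one_of_eq_one (hQnn none) (hQrow none) hQ00 (Option.some_ne_none y)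
    rcases z with _ | z
    · simp [hnone] at hz
    · obtain ⟨hxz, hzy⟩ := mul_ne_zero_iff.1 hz
      rw [hcQ z y hzy, label_eq_add_of_kpow_ne_zero hQnn hQrow hQ00 hcQ n x z hxz]
      push_cast
      ring

lemma evolve_indicator_some (hQnn : ∀ a b, 0 ≤ Q a b) (hQrow : ∀ a, HasSum (Q a) 1)
    (hQ00 : Q none none = 1) (hcQ : ∀ x y : S, Q (some x) (some y) ≠ 0 → c y = c x + 1)
    (μ : S → ℝ) (j : ZMod d) (n : ℕ) (y : S) :
    evolve Q ((c ⁻¹' {j}).indicator μ) n (some y) =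
      (c ⁻¹' {j + n}).indicator (fun z => evolve Q μ n (some z)) y := by
  have hlabel := label_eq_add_of_kpow_ne_zero hQnn hQrow hQ00 hcQ n
  simp only [evolve, Set.indicator_apply, Set.mem_preimage, Set.mem_singleton_iff]
  split_ifs with hy
  · refine tsum_congr fun x => ?_
    by_cases hk : kpow Q n (some x) (some y) = 0
    · simp [hk]
    · have hx : c x = j := add_right_cancel ((hlabel x y hk).symm.trans hy)
      simp [hx]
  · refine (tsum_congr fun x => ?_).trans tsum_zero
    by_cases hk : kpow Q n (some x) (some y) = 0
    · simp [hk]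
    · have hx : c x ≠ j := fun hx => hy (by rw [hlabel x y hk, hx])
      simp [hx]

end CyclicClasses

section QSD

variable {S : Type*} {Q : Option S → Option S → ℝ} {ν : S → ℝ}

lemma condT_one (ν : S → ℝ) (y : S) : condT Q ν 1 y = evolve Q ν 1 (some y) / stayProb Q ν := by
  rw [condT, stayProb_eq_one_sub_evolve]

lemma stayProb_nonneg (hQnn : ∀ a b, 0 ≤ Q a b) (hQrow : ∀ a, HasSum (Q a) 1)
    (hν : IsProbability ν) : 0 ≤ stayProb Q ν := by
  rw [stayProb_eq_one_sub_evolve]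
  exact (hasSum_comp_some (hasSum_evolve hQnn hQrow hν.1 hν.2 1)).nonneg
    fun y => evolve_nonneg hQnn hν.1 1 _

lemma stayProb_pos_of_qsd (hQnn : ∀ a b, 0 ≤ Q a b) (hQrow : ∀ a, HasSum (Q a) 1)
    (hν : IsProbability ν) (hqsd : ∀ y, condT Q ν 1 y = ν y) : 0 < stayProb Q ν := by
  refine (stayProb_nonneg hQnn hQrow hν).lt_of_ne' fun h0 => ?_
  have hν0 : ν = 0 := funext fun y => by rw [← hqsd y, condT_one, h0, div_zero, Pi.zero_apply]
  exact one_ne_zero (hν.2.unique (hν0 ▸ hasSum_zero))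

lemma evolve_some_of_qsd (hQnn : ∀ a b, 0 ≤ Q a b) (hQrow : ∀ a, HasSum (Q a) 1)
    (hQ00 : Q none none = 1) (hν : IsProbability ν) (hqsd : ∀ y, condT Q ν 1 y = ν y)
    (n : ℕ) (y : S) : evolve Q ν n (some y) = stayProb Q ν ^ n * ν y := by
  induction n generalizing y with
  | zero => simp [evolve, kpow]
  | succ n ih =>
    have hone : ∑' z : S, ν z * Q (some z) (some y) = stayProb Q ν * ν y := by
      have h := hqsd y
      rw [condT_one, div_eq_iff (stayProb_pos_of_qsd hQnn hQrow hν hqsd).ne'] at h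
      simpa only [evolve, kpow_one, mul_comm (ν y)] using h
    simp only [evolve_succ_some hQnn hQrow hQ00 hν.1 hν.2.summable, ih, mul_assoc,
      tsum_mul_left, hone]
    ring

end QSD

section ClassMass

variable {S : Type*} {Q : Option S → Option S → ℝ} {ν : S → ℝ} {d : ℕ} {c : S → ZMod d}

lemma hasSum_indicator_classMass (c : S → ZMod d) (hν : IsProbability ν) (j : ZMod d) :
    HasSum ((c ⁻¹' {j}).indicator ν) (classMass c ν j) := by
  have h := (hν.2.summable.indicator (c ⁻¹' {j})).hasSum
  simpa [classMass, Set.indicator_apply] using h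

lemma condClass_eq_div (ν : S → ℝ) (j : ZMod d) :
    condClass c ν j = fun y => (c ⁻¹' {j}).indicator ν y / classMass c ν j := by
  funext y
  by_cases hy : c y = j <;> simp [condClass, hy]

lemma evolve_indicator_some_of_qsd (hQnn : ∀ a b, 0 ≤ Q a b) (hQrow : ∀ a, HasSum (Q a) 1)
    (hQ00 : Q none none = 1) (hcQ : ∀ x y : S, Q (some x) (some y) ≠ 0 → c y = c x + 1)
    (hν : IsProbability ν) (hqsd : ∀ y, condT Q ν 1 y = ν y) (j : ZMod d) (n : ℕ) (y : S) :
    evolve Q ((c ⁻¹' {j}).indicator ν) n (some y) =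
      stayProb Q ν ^ n * (c ⁻¹' {j + n}).indicator ν y := by
  simp only [evolve_indicator_some hQnn hQrow hQ00 hcQ, Set.indicator_apply,
    evolve_some_of_qsd hQnn hQrow hQ00 hν hqsd, mul_ite, mul_zero]

lemma classMass_sub_evolve_none (hQnn : ∀ a b, 0 ≤ Q a b) (hQrow : ∀ a, HasSum (Q a) 1)
    (hQ00 : Q none none = 1) (hcQ : ∀ x y : S, Q (some x) (some y) ≠ 0 → c y = c x + 1)
    (hν : IsProbability ν) (hqsd : ∀ y, condT Q ν 1 y = ν y) (j : ZMod d) (n : ℕ) :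
    classMass c ν j - evolve Q ((c ⁻¹' {j}).indicator ν) n none =
      stayProb Q ν ^ n * classMass c ν (j + n) := by
  have hmass := hasSum_comp_some <| hasSum_evolve hQnn hQrow
    (fun _ => Set.indicator_nonneg (fun x _ => hν.1 x) _) (hasSum_indicator_classMass c hν j) n
  simp only [evolve_indicator_some_of_qsd hQnn hQrow hQ00 hcQ hν hqsd] at hmass
  exact hmass.unique ((hasSum_indicator_classMass c hν _).mul_left _)

lemma classMass_pos [NeZero d] (hQnn : ∀ a b, 0 ≤ Q a b) (hQrow : ∀ a, HasSum (Q a) 1)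
    (hQ00 : Q none none = 1) (hcQ : ∀ x y : S, Q (some x) (some y) ≠ 0 → c y = c x + 1)
    (hν : IsProbability ν) (hqsd : ∀ y, condT Q ν 1 y = ν y) (j : ZMod d) :
    0 < classMass c ν j := by
  have hρ0 : ∀ k x, 0 ≤ (c ⁻¹' {k}).indicator ν x :=
    fun k => Set.indicator_nonneg fun x _ => hν.1 x
  have hm0 : ∀ k, 0 ≤ classMass c ν k :=
    fun k => (hasSum_indicator_classMass c hν k).nonneg (hρ0 k)
  refine (hm0 j).lt_of_ne' fun hj => ?_
  have hm : ∀ k, classMass c ν k = 0 := fun k => by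
    have hbal := classMass_sub_evolve_none hQnn hQrow hQ00 hcQ hν hqsd j (k - j).val
    rw [ZMod.natCast_zmod_val, add_sub_cancel, hj] at hbal
    have he := evolve_nonneg hQnn (hρ0 j) (k - j).val none
    have ha := pow_pos (stayProb_pos_of_qsd hQnn hQrow hν hqsd) (k - j).val
    exact le_antisymm (nonpos_of_mul_nonpos_right (by linarith) ha) (hm0 k)
  have hν0 : ν = 0 := funext fun y => by
    have hy := le_hasSum (hasSum_indicator_classMass c hν (c y)) y fun x _ => hρ0 _ x
    rw [hm, Set.indicator_of_mem (show y ∈ c ⁻¹' {c y} from rfl)] at hy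
    exact le_antisymm hy (hν.1 y)
  exact one_ne_zero (hν.2.unique (hν0 ▸ hasSum_zero))

lemma classMass_mul_stayProb_condClass [NeZero d] (hQnn : ∀ a b, 0 ≤ Q a b)
    (hQrow : ∀ a, HasSum (Q a) 1) (hQ00 : Q none none = 1)
    (hcQ : ∀ x y : S, Q (some x) (some y) ≠ 0 → c y = c x + 1)
    (hν : IsProbability ν) (hqsd : ∀ y, condT Q ν 1 y = ν y) (j : ZMod d) :
    classMass c ν j * stayProb Q (condClass c ν j) = stayProb Q ν * classMass c ν (j + 1) := by
  have hbal := classMass_sub_evolve_none hQnn hQrow hQ00 hcQ hν hqsd j 1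
  rw [Nat.cast_one, pow_one] at hbal
  have hm := (classMass_pos hQnn hQrow hQ00 hcQ hν hqsd j).ne'
  rw [stayProb_eq_one_sub_evolve, condClass_eq_div, evolve_div_const, ← hbal]
  field_simp

lemma condT_condClass [NeZero d] (hQnn : ∀ a b, 0 ≤ Q a b) (hQrow : ∀ a, HasSum (Q a) 1)
    (hQ00 : Q none none = 1) (hcQ : ∀ x y : S, Q (some x) (some y) ≠ 0 → c y = c x + 1)
    (hν : IsProbability ν) (hqsd : ∀ y, condT Q ν 1 y = ν y) (j : ZMod d) (n : ℕ) (y : S) :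
    condT Q (condClass c ν j) n y = condClass c ν (j + n) y := by
  have hpos := classMass_pos hQnn hQrow hQ00 hcQ hν hqsd
  have ha := (pow_pos (stayProb_pos_of_qsd hQnn hQrow hν hqsd) n).ne'
  rw [condT, condClass_eq_div, condClass_eq_div, evolve_div_const, evolve_div_const,
    one_sub_div (hpos j).ne', classMass_sub_evolve_none hQnn hQrow hQ00 hcQ hν hqsd,
    evolve_indicator_some_of_qsd hQnn hQrow hQ00 hcQ hν hqsd]
  field_simp [(hpos j).ne', (hpos (j + n)).ne']

end ClassMass

theorem periodic_qsd_classes_general {S : Type*}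
    (Q : Option S → Option S → ℝ) (d : ℕ) (hd : 2 ≤ d)
    (c : S → ZMod d)
    (hQnn : ∀ a b, 0 ≤ Q a b)
    (hQrow : ∀ a, HasSum (Q a) 1)
    (hQ00 : Q none none = 1)
    (hcQ : ∀ x y : S, Q (some x) (some y) ≠ 0 → c y = c x + 1)
    (ν : S → ℝ) (hν : IsProbability ν) (hqsd : ∀ y, condT Q ν 1 y = ν y) :
    (∀ j : ZMod d,
      classMass c ν j * stayProb Q (condClass c ν j) =
        stayProb Q ν * classMass c ν (j + 1)) ∧
    (∀ j : ZMod d, ∀ n : ℕ, ∀ y : S,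
      condT Q (condClass c ν j) n y = condClass c ν (j + (n : ZMod d)) y) ∧
    stayProb Q ν ^ d =
      ∏ j ∈ Finset.range d, stayProb Q (condClass c ν (j : ZMod d)) := by
  have : NeZero d := ⟨by omega⟩
  have hmass := classMass_mul_stayProb_condClass hQnn hQrow hQ00 hcQ hν hqsd
  exact ⟨hmass, condT_condClass hQnn hQrow hQ00 hcQ hν hqsd,
    pow_eq_prod_of_mul_eq_mul_add_one
      (fun j => (classMass_pos hQnn hQrow hQ00 hcQ hν hqsd j).ne') hmass⟩

/-- For a `d`-periodic chain absorbed at `0` with cyclic subclasses `S_1,...,S_d`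
(the fibers of the labeling `c`), if `ν` is a qsd with `m_j = ν(S_j)` and
`ν_j = ν(· | S_j)`, then `m_j a(ν_j) = a(ν) m_{j+1}`, `ν_j T_n = ν_{j+n}` (indices
mod `d`), and consequently `a(ν)^d = a(ν_1)⋯a(ν_d)`. -/
theorem periodic_qsd_classes {S : Type*} [Countable S]
    (Q : Option S → Option S → ℝ) (d : ℕ) (hd : 2 ≤ d)
    (c : S → ZMod d)
    (hQnn : ∀ a b, 0 ≤ Q a b)
    (hQrow : ∀ a, HasSum (Q a) 1)
    (hQ00 : Q none none = 1)
    (hQx0 : ∀ x : S, Q (some x) none < 1)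
    (hirr : ∀ x y : S, ∃ n : ℕ, 1 ≤ n ∧ 0 < kpow Q n (some x) (some y))
    (hperiod : ∀ x : S,
      (∀ n, 1 ≤ n → 0 < kpow Q n (some x) (some x) → d ∣ n) ∧
      (∀ m : ℕ, (∀ n, 1 ≤ n → 0 < kpow Q n (some x) (some x) → m ∣ n) → m ∣ d))
    (hcQ : ∀ x y : S, Q (some x) (some y) ≠ 0 → c y = c x + 1)
    (hclass : ∀ x y : S, c x = c y ↔
      ∃ l : ℕ, 1 ≤ l ∧ 0 < kpow Q (d * l) (some x) (some y))
    (ν : S → ℝ) (hν : IsProbability ν) (hqsd : ∀ y, condT Q ν 1 y = ν y) :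
    (∀ j : ZMod d,
      classMass c ν j * stayProb Q (condClass c ν j) =
        stayProb Q ν * classMass c ν (j + 1)) ∧
    (∀ j : ZMod d, ∀ n : ℕ, ∀ y : S,
      condT Q (condClass c ν j) n y = condClass c ν (j + (n : ZMod d)) y) ∧
    stayProb Q ν ^ d =
      ∏ j ∈ Finset.range d, stayProb Q (condClass c ν (j : ZMod d)) :=
  periodic_qsd_classes_general Q d hd c hQnn hQrow hQ00 hcQ ν hν hqsd
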